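/- arXiv:1905.10624 — 2 statements merged into one kernel-verified Lean document; each statement's English description precedes it below -/
import Mathlib

section
/- Let F_opt ∈ ℂ^{N×M} and let F_BB ∈ ℂ^{r×M} satisfy F_BB F_BBᴴ = I_r. Set C = F_opt F_BBᴴ ∈ ℂ^{N×r} and define F* ∈ ℂ^{N×r} entrywise by F*(i,j) = C(i,j) if |C(i,j)| ≤ 2 and F*(i,j) = 2·C(i,j)/|C(i,j)| otherwise. Then F* is a global minimizer of ‖F_opt − F_RF·F_BB‖_F² over all F_RF ∈ ℂ^{N×r} satisfying the entrywise amplitude constraint |F_RF(i,j)| ≤ 2; that is, every F_RF with |F_RF(i,j)| ≤ 2 for all i,j satisfies ‖F_opt − F*·F_BB‖_F² ≤ ‖F_opt − F_RF·F_BB‖_F². -/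
open Matrix BigOperators

noncomputable def clipTwo {N M r : ℕ} (Fopt : Matrix (Fin N) (Fin M) ℂ)
    (FBB : Matrix (Fin r) (Fin M) ℂ) : Matrix (Fin N) (Fin r) ℂ :=
  Matrix.of fun i j =>
    if ‖(Fopt * FBBᴴ) i j‖ ≤ 2 then (Fopt * FBBᴴ) i j
    else (2 : ℂ) * (Fopt * FBBᴴ) i j / (‖(Fopt * FBBᴴ) i j‖ : ℂ)

/-! Since `F_BB F_BBᴴ = I`, Pythagoras gives
`‖F_opt − X F_BB‖² = ‖F_opt‖² − ‖C‖² + ‖C − X‖²` with `C = F_opt F_BBᴴ`, so the problem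
decouples into independent scalar problems `min ‖C(i,j) − x‖` over the disc `‖x‖ ≤ 2`, whose
solution is the radial projection of `C(i,j)` onto the disc. -/

noncomputable def radialClip (R : ℝ) (c : ℂ) : ℂ :=
  if ‖c‖ ≤ R then c else R * c / ‖c‖

theorem norm_sub_radialClip_le {R : ℝ} (c x : ℂ) (hx : ‖x‖ ≤ R) :
    ‖c - radialClip R c‖ ≤ ‖c - x‖ := by
  unfold radialClip
  split_ifs with hc
  · simp
  · push Not at hc
    have hc₀ : 0 < ‖c‖ := (norm_nonneg x).trans_lt (hx.trans_lt hc)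
    have hdist : c - R * c / ‖c‖ = ((1 - R / ‖c‖ : ℝ) : ℂ) * c := by
      push_cast
      field_simp
    calc ‖c - R * c / ‖c‖‖ = ‖c‖ - R := by
          rw [hdist, norm_mul, Complex.norm_real, Real.norm_eq_abs,
            abs_of_nonneg (by rw [sub_nonneg, div_le_one hc₀]; exact hc.le)]
          field_simp
      _ ≤ ‖c‖ - ‖x‖ := by linarith
      _ ≤ ‖c - x‖ := norm_sub_norm_le c x

theorem clipTwo_apply {N M r : ℕ} (Fopt : Matrix (Fin N) (Fin M) ℂ)
    (FBB : Matrix (Fin r) (Fin M) ℂ) (i : Fin N) (j : Fin r) :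
    clipTwo Fopt FBB i j = radialClip 2 ((Fopt * FBBᴴ) i j) := by
  simp [clipTwo, radialClip]

section Pythagoras

variable {m n k : Type*} [Fintype m] [Fintype n] [Fintype k] [DecidableEq k]

theorem trace_sub_mul_mul_conjTranspose {R : Type*} [CommRing R] [StarRing R]
    (A : Matrix m n R) (B : Matrix k n R) (X : Matrix m k R) (hB : B * Bᴴ = 1) :
    trace ((A - X * B) * (A - X * B)ᴴ) =
      trace (A * Aᴴ) - trace (A * Bᴴ * (A * Bᴴ)ᴴ) + trace ((A * Bᴴ - X) * (A * Bᴴ - X)ᴴ) := by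
  have hXB : X * B * (X * B)ᴴ = X * Xᴴ := by
    rw [conjTranspose_mul, Matrix.mul_assoc, ← Matrix.mul_assoc B, hB, Matrix.one_mul]
  have hABX : A * Bᴴ * Xᴴ = A * (X * B)ᴴ := by
    rw [conjTranspose_mul, Matrix.mul_assoc]
  have hXBA : X * (A * Bᴴ)ᴴ = X * B * Aᴴ := by
    rw [conjTranspose_mul, conjTranspose_conjTranspose, Matrix.mul_assoc]
  have hABBA : A * Bᴴ * (A * Bᴴ)ᴴ = A * Bᴴ * B * Aᴴ := by
    rw [conjTranspose_mul, conjTranspose_conjTranspose, Matrix.mul_assoc, Matrix.mul_assoc,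
      Matrix.mul_assoc]
  simp only [conjTranspose_sub, Matrix.sub_mul, Matrix.mul_sub, trace_sub, hXB, hABX, hXBA,
    hABBA]
  ring

variable {𝕜 : Type*} [RCLike 𝕜]

theorem sum_sq_norm_eq_re_trace_mul_conjTranspose (A : Matrix m n 𝕜) :
    ∑ i, ∑ j, ‖A i j‖ ^ 2 = RCLike.re (trace (A * Aᴴ)) := by
  simp [trace, Matrix.mul_apply, RCLike.mul_conj]

theorem sum_sq_norm_sub_mul (A : Matrix m n 𝕜) (B : Matrix k n 𝕜) (X : Matrix m k 𝕜)
    (hB : B * Bᴴ = 1) :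
    ∑ i, ∑ j, ‖(A - X * B) i j‖ ^ 2 =
      ∑ i, ∑ j, ‖A i j‖ ^ 2 - ∑ i, ∑ j, ‖(A * Bᴴ) i j‖ ^ 2 +
        ∑ i, ∑ j, ‖(A * Bᴴ - X) i j‖ ^ 2 := by
  simp only [sum_sq_norm_eq_re_trace_mul_conjTranspose]
  rw [trace_sub_mul_mul_conjTranspose A B X hB, map_add, map_sub]

end Pythagoras

/-- Closed-form RF-only precoding with the DPS implementation: for a
semi-orthogonal baseband precoder `F_BB` (`F_BB · F_BBᴴ = I`), the entrywise
clipping of `F_opt · F_BBᴴ` at amplitude 2 globally minimizes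
`‖F_opt − F_RF · F_BB‖_F²` over all `F_RF` with `|F_RF(i,j)| ≤ 2`. -/
theorem rf_only_precoding_optimal (N M r : ℕ)
    (Fopt : Matrix (Fin N) (Fin M) ℂ) (FBB : Matrix (Fin r) (Fin M) ℂ)
    (hBB : FBB * FBBᴴ = 1) :
    ∀ FRF : Matrix (Fin N) (Fin r) ℂ, (∀ i j, ‖FRF i j‖ ≤ 2) →
      ∑ i, ∑ j, ‖(Fopt - clipTwo Fopt FBB * FBB) i j‖ ^ 2
      ≤ ∑ i, ∑ j, ‖(Fopt - FRF * FBB) i j‖ ^ 2 := by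
  intro FRF hFRF
  rw [sum_sq_norm_sub_mul _ _ _ hBB, sum_sq_norm_sub_mul _ _ _ hBB]
  gcongr with i _ j _
  rw [Matrix.sub_apply, Matrix.sub_apply, clipTwo_apply]
  exact norm_sub_radialClip_le _ _ (hFRF i j)
end

section
/- Let F ∈ ℂ^{n×m}, let g : {1,…,n} → {1,…,k} be any mapping from antennas to RF chains, and for each row index i let y_i ∈ ℂ^m denote the transpose of the i-th row of F. Then there exist F_RF ∈ ℂ^{n×k} with F_RF(i,j) = 0 whenever j ≠ g(i), and F_BB ∈ ℂ^{k×m}, such that ‖F − F_RF·F_BB‖_F² = ‖F‖_F² − ∑_{j=1}^{k} λ_max(∑_{i : g(i)=j} y_i y_iᴴ). Namely, taking the j-th row of F_BB to be (the conjugate transpose of) a top eigenvector x_j of ∑_{i : g(i)=j} y_i y_iᴴ and F_RF(i,g(i)) = (x_{g(i)}ᴴ y_i)/‖x_{g(i)}‖₂² attains this value, so the optimal fixed-mapping partially-connected hybrid precoding objective equals ‖F‖_F² minus the sum of the largest eigenvalues of the per-RF-chain covariance matrices. -/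
open Matrix BigOperators

/-- The rank-one matrix `y yᴴ` with `(j,k)` entry `y_j · conj(y_k)`. -/
def outerSelf {m : ℕ} (y : Fin m → ℂ) : Matrix (Fin m) (Fin m) ℂ :=
  Matrix.of fun j k => y j * (starRingEnd ℂ) (y k)

/-- The largest eigenvalue of a Hermitian matrix. -/
noncomputable def lamMax {m : ℕ} {G : Matrix (Fin m) (Fin m) ℂ}
    (hG : G.IsHermitian) : ℝ :=
  ⨆ t, hG.eigenvalues t

/-!
Give RF chain `j` a unit top eigenvector `x_j` of `G_j = ∑_{g i = j} y_i y_iᴴ` as its row of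
`F_BB`, and antenna `i` the gain `⟪x_{g i}, y_i⟫`. Then row `i` of `F_RF·F_BB` is the orthogonal
projection of `y_i` onto `x_{g i}`, so by Pythagoras the residual of row `i` is
`‖y_i‖² - |⟪x_{g i}, y_i⟫|²`. Summing over the antennas of chain `j` gives
`∑ |⟪x_j, y_i⟫|² = x_jᴴ G_j x_j = λ_max(G_j)`.
-/

open scoped InnerProductSpace
open WithLp

section Projection

variable {𝕜 E : Type*} [RCLike 𝕜] [NormedAddCommGroup E] [InnerProductSpace 𝕜 E]

theorem norm_sub_inner_smul_sq {v : E} (hv : ‖v‖ = 1) (y : E) :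
    ‖y - ⟪v, y⟫_𝕜 • v‖ ^ 2 = ‖y‖ ^ 2 - ‖⟪v, y⟫_𝕜‖ ^ 2 := by
  rw [@norm_sub_sq 𝕜, inner_smul_right, ← inner_conj_symm v y, RCLike.conj_mul, norm_smul, hv,
    RCLike.norm_conj, ← RCLike.ofReal_pow, RCLike.ofReal_re]
  ring

theorem sum_norm_sub_inner_smul_sq_fiberwise {ι κ : Type*} [Fintype ι] [Fintype κ]
    [DecidableEq κ] (y : ι → E) (g : ι → κ) {x : κ → E} (hx : ∀ j, ‖x j‖ = 1) :
    (∑ i, ‖y i - ⟪x (g i), y i⟫_𝕜 • x (g i)‖ ^ 2 : ℝ)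
      = ∑ i, ‖y i‖ ^ 2 - ∑ j, ∑ i ∈ Finset.univ.filter (fun i => g i = j), ‖⟪x j, y i⟫_𝕜‖ ^ 2 := by
  simp only [norm_sub_inner_smul_sq (hx _), Finset.sum_sub_distrib]
  congr 1
  rw [← Finset.sum_fiberwise Finset.univ g]
  refine Finset.sum_congr rfl fun j _ => Finset.sum_congr rfl fun i hi => ?_
  rw [(Finset.mem_filter.1 hi).2]

end Projection

section QuadraticForm

variable {ι 𝕜 n : Type*} [RCLike 𝕜] [Fintype n]

theorem inner_sum_vecMulVec_mulVec (s : Finset ι) (y : ι → n → 𝕜) (x : EuclideanSpace 𝕜 n) :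
    ⟪x, toLp 2 ((∑ i ∈ s, vecMulVec (y i) (star (y i))) *ᵥ x)⟫_𝕜
      = ∑ i ∈ s, ((‖⟪x, toLp 2 (y i)⟫_𝕜‖ ^ 2 : ℝ) : 𝕜) := by
  simp only [Matrix.sum_mulVec, vecMulVec_mulVec, op_smul_eq_smul, WithLp.toLp_sum,
    WithLp.toLp_smul, inner_sum, inner_smul_right]
  refine Finset.sum_congr rfl fun i _ => ?_
  have h : star (y i) ⬝ᵥ x.ofLp = ⟪toLp 2 (y i), x⟫_𝕜 := dotProduct_comm _ _
  rw [h, ← inner_conj_symm, RCLike.conj_mul, RCLike.ofReal_pow]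

theorem sum_norm_inner_sq_eq_of_mulVec_eq_smul {s : Finset ι} {y : ι → n → 𝕜}
    {x : EuclideanSpace 𝕜 n} {μ : ℝ} (hx : ‖x‖ = 1)
    (h : (∑ i ∈ s, vecMulVec (y i) (star (y i))) *ᵥ x = μ • x.ofLp) :
    ∑ i ∈ s, ‖⟪x, toLp 2 (y i)⟫_𝕜‖ ^ 2 = μ := by
  have hquad := inner_sum_vecMulVec_mulVec s y x
  rw [h, WithLp.toLp_smul, toLp_ofLp, RCLike.real_smul_eq_coe_smul (K := 𝕜),
    inner_smul_real_right, inner_self_eq_norm_sq_to_K, hx, RCLike.ofReal_one, one_pow,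
    RCLike.real_smul_eq_coe_mul, mul_one] at hquad
  exact_mod_cast hquad.symm

end QuadraticForm

theorem Matrix.IsHermitian.exists_norm_eq_one_mulVec_eq_lamMax_smul {m : ℕ} [NeZero m]
    {G : Matrix (Fin m) (Fin m) ℂ} (hG : G.IsHermitian) :
    ∃ v : EuclideanSpace ℂ (Fin m), ‖v‖ = 1 ∧ G *ᵥ v.ofLp = lamMax hG • v.ofLp := by
  obtain ⟨t, ht⟩ := exists_eq_ciSup_of_finite (f := hG.eigenvalues)
  exact ⟨_, hG.eigenvectorBasis.orthonormal.1 t,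
    lamMax.eq_def hG ▸ ht ▸ hG.mulVec_eigenvectorBasis t⟩

section Precoder

variable {ι κ ν R : Type*} [Fintype κ] [DecidableEq κ] [NonUnitalNonAssocSemiring R]

def partialPrecoder (g : ι → κ) (c : ι → R) : Matrix ι κ R :=
  of fun i j => if j = g i then c i else 0

theorem partialPrecoder_mul_apply (g : ι → κ) (c : ι → R) (B : Matrix κ ν R) (i : ι) (l : ν) :
    (partialPrecoder g c * B) i l = c i * B (g i) l := by
  simp [partialPrecoder, Matrix.mul_apply, ite_mul]

end Precoder

/-- Attainment for fixed-mapping partially-connected hybrid precoding: there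
exist `F_RF` (with `F_RF(i,j) = 0` for `j ≠ g i`) and `F_BB` achieving
`‖F − F_RF·F_BB‖_F² = ‖F‖_F² − ∑ⱼ λ_max(∑_{i:g i=j} yᵢ yᵢᴴ)`, where `yᵢ` is the
transpose of the `i`-th row of `F`. -/
theorem partially_connected_attained (n m k : ℕ)
    (F : Matrix (Fin n) (Fin m) ℂ) (g : Fin n → Fin k)
    (hG : ∀ j, (∑ i ∈ Finset.univ.filter (fun i => g i = j),
        outerSelf (fun l => F i l)).IsHermitian) :
    ∃ (FRF : Matrix (Fin n) (Fin k) ℂ) (FBB : Matrix (Fin k) (Fin m) ℂ),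
      (∀ i j, j ≠ g i → FRF i j = 0) ∧
      ∑ i, ∑ l, ‖(F - FRF * FBB) i l‖ ^ 2
        = (∑ i, ∑ l, ‖F i l‖ ^ 2) - ∑ j, lamMax (hG j) := by
  rcases m.eq_zero_or_pos with rfl | hm
  · exact ⟨0, 0, fun _ _ _ => rfl, by simp [lamMax]⟩
  have : NeZero m := ⟨hm.ne'⟩
  choose x hx heig using fun j => (hG j).exists_norm_eq_one_mulVec_eq_lamMax_smul
  set y : Fin n → EuclideanSpace ℂ (Fin m) := fun i => toLp 2 (F i)
  set c : Fin n → ℂ := fun i => ⟪x (g i), y i⟫_ℂ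
  refine ⟨partialPrecoder g c, of fun j => (x j).ofLp, fun i j hj => if_neg hj, ?_⟩
  calc _ = ∑ i, ‖y i - c i • x (g i)‖ ^ 2 := by
        simp [EuclideanSpace.norm_sq_eq, partialPrecoder_mul_apply, y]
    _ = _ := sum_norm_sub_inner_smul_sq_fiberwise y g hx
    _ = _ := by
        congr 1
        · simp [EuclideanSpace.norm_sq_eq, y]
        -- `outerSelf y` unfolds to `vecMulVec y (star y)`
        · exact Finset.sum_congr rfl fun j _ =>
            sum_norm_inner_sq_eq_of_mulVec_eq_smul (hx j) (heig j)
end
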